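/- Threshold structure of the optimal policy (Theorem 1, Property 2, first part): let V : 𝒬 → ℝ be monotone and let u* ∈ 𝒰 be such that u*_n = m ∈ M_n for some BS n ∈ {0,…,N}. Then for every Q ∈ 𝒬 with Q_{n,m} ≥ φ_{u*}⁻(Q_{−n,−m}), one has Δ_{u*,v}(Q) ≤ 0 for every v ∈ 𝒰; in particular u* attains min_{u∈𝒰} J_V(Q,u), i.e., the optimal scheduling of content m by BS n is of threshold type in Q_{n,m}. -/

import Mathlib

open Finset

namespace HetNet

/-- The queue index set `I = {(n,m) : 0 ≤ n ≤ N, m ∈ M_n}`. -/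
abbrev Idx {N M : ℕ} (cache : Fin (N + 1) → Finset (Fin M)) : Type :=
  {p : Fin (N + 1) × Fin M // p.2 ∈ cache p.1}

/-- The feasible action space `𝒰`: each BS schedules a cached content or idles (`none`),
and the MBS (BS `0`) and the SBSs do not operate concurrently. -/
def Feasible {N M : ℕ} (cache : Fin (N + 1) → Finset (Fin M))
    (u : Fin (N + 1) → Option (Fin M)) : Prop :=
  (∀ n m, u n = some m → m ∈ cache n) ∧ (u 0 ≠ none → ∀ n, n ≠ 0 → u n = none)

instance {N M : ℕ} (cache : Fin (N + 1) → Finset (Fin M)) :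
    DecidablePred (Feasible cache) := by
  intro u; unfold Feasible; infer_instance

instance {N M : ℕ} (cache : Fin (N + 1) → Finset (Fin M)) :
    Nonempty {u : Fin (N + 1) → Option (Fin M) // Feasible cache u} :=
  ⟨⟨fun _ => none, by
    refine ⟨fun _ _ h => ?_, fun h => absurd rfl h⟩; cases h⟩⟩

/-- Queue `(n,m)` is served by action `u`. -/
def Served {N M : ℕ} (u : Fin (N + 1) → Option (Fin M)) (n : Fin (N + 1)) (m : Fin M) : Prop :=
  (n = 0 ∧ u 0 = some m) ∨ (n ≠ 0 ∧ (u 0 = some m ∨ u n = some m))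

instance {N M : ℕ} (u : Fin (N + 1) → Option (Fin M)) (n : Fin (N + 1)) (m : Fin M) :
    Decidable (Served u n m) := by unfold Served; infer_instance

/-- The queue transition map `T(Q,u,A)`. -/
def T {N M : ℕ} {cache : Fin (N + 1) → Finset (Fin M)} (bound : Idx cache → ℕ)
    (Q : Idx cache → ℕ) (u : Fin (N + 1) → Option (Fin M)) (A : Idx cache → ℕ) :
    Idx cache → ℕ := fun i =>
  if Served u i.val.1 i.val.2 then min (A i) (bound i) else min (Q i + A i) (bound i)

/-- The network power cost `p(u) = Σ_n p(n, u_n)` (with `p(n,0) = 0` for an idling BS). -/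
def pcost {N M : ℕ} (p : Fin (N + 1) → Fin M → ℝ) (u : Fin (N + 1) → Option (Fin M)) : ℝ :=
  ∑ n, (u n).elim 0 (p n)

/-- The sum request queue length `d(Q)`. -/
def dcost {N M : ℕ} {cache : Fin (N + 1) → Finset (Fin M)} (Q : Idx cache → ℕ) : ℝ :=
  ∑ i, (Q i : ℝ)

/-- The per-stage cost `g(Q,u) = d(Q) + w·p(u)`. -/
def gcost {N M : ℕ} (p : Fin (N + 1) → Fin M → ℝ) (w : ℝ)
    {cache : Fin (N + 1) → Finset (Fin M)}
    (Q : Idx cache → ℕ) (u : Fin (N + 1) → Option (Fin M)) : ℝ :=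
  dcost Q + w * pcost p u

/-- The state-action cost `J_V(Q,u) = g(Q,u) + Σ_{A∈𝒜} P(A)·V(T(Q,u,A))`. -/
def Jcost {N M : ℕ} (p : Fin (N + 1) → Fin M → ℝ) (w : ℝ)
    {cache : Fin (N + 1) → Finset (Fin M)} (bound : Idx cache → ℕ)
    {ι : Type} [Fintype ι] (P : ι → ℝ) (A : ι → Idx cache → ℕ)
    (V : (Idx cache → ℕ) → ℝ) (Q : Idx cache → ℕ)
    (u : Fin (N + 1) → Option (Fin M)) : ℝ :=
  gcost p w Q u + ∑ a, P a * V (T bound Q u (A a))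

open scoped Classical in
/-- `Φ_u(Q_{−n,−m})`: the set of queue lengths `q ∈ {0,…,N_{n,m}}` at coordinate `i = (n,m)`
such that action `u` dominates every other feasible action at the state obtained from `Q`
by replacing its `(n,m)`-coordinate with `q`.  Its `Finset.max` (valued in `WithBot ℕ`,
`⊥` = −∞) is `φ_u⁺(Q_{−n,−m})`, and its `Finset.min` (valued in `WithTop ℕ`, `⊤` = +∞)
is `φ_u⁻(Q_{−n,−m})`. -/
noncomputable def Phi {N M : ℕ} (p : Fin (N + 1) → Fin M → ℝ) (w : ℝ)
    {cache : Fin (N + 1) → Finset (Fin M)} (bound : Idx cache → ℕ)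
    {ι : Type} [Fintype ι] (P : ι → ℝ) (A : ι → Idx cache → ℕ)
    (V : (Idx cache → ℕ) → ℝ) (u : Fin (N + 1) → Option (Fin M))
    (i : Idx cache) (Q : Idx cache → ℕ) : Finset ℕ :=
  (Finset.range (bound i + 1)).filter fun q =>
    ∀ v, Feasible cache v → v ≠ u →
      Jcost p w bound P A V (Function.update Q i q) u -
        Jcost p w bound P A V (Function.update Q i q) v ≤ 0

/-!
Let `i = (n, m)` be the queue served by `u*` and let `q₀ ≤ Q_i` be the least element of
`Φ_{u*}`. Lowering `Q_i` to `q₀` does not change the post-decision states of `u*`, which empty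
queue `i`, so `J_V(·, u*)` drops only by the stage cost `Q_i - q₀`. For any other action `v` the
post-decision states can only shrink, so by monotonicity of `V` the cost `J_V(·, v)` drops by at
least as much. Hence `Δ_{u*,v}(Q) ≤ Δ_{u*,v}` at the lowered state, which is `≤ 0` because
`q₀ ∈ Φ_{u*}`.
-/

section

variable {N M : ℕ} {cache : Fin (N + 1) → Finset (Fin M)}

theorem served_of_eq_some {u : Fin (N + 1) → Option (Fin M)} {n : Fin (N + 1)} {m : Fin M}
    (h : u n = some m) : Served u n m := by
  by_cases hn : n = 0
  · exact Or.inl ⟨hn, hn ▸ h⟩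
  · exact Or.inr ⟨hn, Or.inr h⟩

section Transition

variable (bound : Idx cache → ℕ) (u : Fin (N + 1) → Option (Fin M)) (A : Idx cache → ℕ)

theorem T_le_bound (Q : Idx cache → ℕ) (j : Idx cache) : T bound Q u A j ≤ bound j := by
  unfold T; split <;> exact min_le_right _ _

theorem T_mono {Q₁ Q₂ : Idx cache → ℕ} (h : Q₁ ≤ Q₂) : T bound Q₁ u A ≤ T bound Q₂ u A := by
  intro j; unfold T
  split
  · exact le_rfl
  · exact min_le_min (Nat.add_le_add_right (h j) _) le_rfl

theorem T_update_of_served (Q : Idx cache → ℕ) {i : Idx cache} (hi : Served u i.val.1 i.val.2)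
    (q : ℕ) : T bound (Function.update Q i q) u A = T bound Q u A := by
  funext j; unfold T
  by_cases hs : Served u j.val.1 j.val.2
  · simp only [hs, if_true]
  · have hji : j ≠ i := by rintro rfl; exact hs hi
    simp only [hs, if_false, Function.update_of_ne hji]

end Transition

section Cost

variable (p : Fin (N + 1) → Fin M → ℝ) (w : ℝ) (bound : Idx cache → ℕ)
  {ι : Type} [Fintype ι] (P : ι → ℝ) (A : ι → Idx cache → ℕ) (V : (Idx cache → ℕ) → ℝ)

theorem expected_value_T_mono (hP : ∀ a, 0 ≤ P a)
    (hV : ∀ Q₁ Q₂ : Idx cache → ℕ, (∀ i, Q₁ i ≤ bound i) → (∀ i, Q₂ i ≤ bound i) →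
      (∀ i, Q₁ i ≤ Q₂ i) → V Q₁ ≤ V Q₂)
    (v : Fin (N + 1) → Option (Fin M)) {Q₁ Q₂ : Idx cache → ℕ} (h : Q₁ ≤ Q₂) :
    ∑ a, P a * V (T bound Q₁ v (A a)) ≤ ∑ a, P a * V (T bound Q₂ v (A a)) :=
  Finset.sum_le_sum fun a _ => mul_le_mul_of_nonneg_left
    (hV _ _ (T_le_bound _ _ _ _) (T_le_bound _ _ _ _) (T_mono bound v (A a) h)) (hP a)

theorem Jcost_sub_le_of_update_served (hP : ∀ a, 0 ≤ P a)
    (hV : ∀ Q₁ Q₂ : Idx cache → ℕ, (∀ i, Q₁ i ≤ bound i) → (∀ i, Q₂ i ≤ bound i) →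
      (∀ i, Q₁ i ≤ Q₂ i) → V Q₁ ≤ V Q₂)
    (u v : Fin (N + 1) → Option (Fin M)) (Q : Idx cache → ℕ) {i : Idx cache}
    (hi : Served u i.val.1 i.val.2) {q : ℕ} (hq : q ≤ Q i) :
    Jcost p w bound P A V Q u - Jcost p w bound P A V Q v ≤
      Jcost p w bound P A V (Function.update Q i q) u -
        Jcost p w bound P A V (Function.update Q i q) v := by
  have hle : Function.update Q i q ≤ Q := update_le_self_iff.mpr hq
  have hu : ∀ a, T bound (Function.update Q i q) u (A a) = T bound Q u (A a) :=
    fun a => T_update_of_served bound u (A a) Q hi q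
  have hv := expected_value_T_mono bound P A V hP hV v hle
  simp only [Jcost, gcost, hu]
  linarith

theorem Jcost_sub_nonpos_of_mem_Phi (u : Fin (N + 1) → Option (Fin M)) (i : Idx cache)
    (Q : Idx cache → ℕ) {q : ℕ} (hq : q ∈ Phi p w bound P A V u i Q)
    {v : Fin (N + 1) → Option (Fin M)} (hv : Feasible cache v) :
    Jcost p w bound P A V (Function.update Q i q) u -
      Jcost p w bound P A V (Function.update Q i q) v ≤ 0 := by
  rcases eq_or_ne v u with rfl | hvu
  · simp
  · exact (Finset.mem_filter.mp hq).2 v hv hvu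

end Cost

theorem _root_.Finset.exists_mem_le_of_min_le {α : Type*} [LinearOrder α] {s : Finset α} {a : α}
    (h : s.min ≤ a) : ∃ b ∈ s, b ≤ a := by
  obtain ⟨b, hb⟩ : ∃ b : α, s.min = b := by
    cases hs : s.min with
    | top => simp [hs] at h
    | coe b => exact ⟨b, rfl⟩
  exact ⟨b, mem_of_min hb, WithTop.coe_le_coe.mp (hb ▸ h)⟩

end

theorem optimal_threshold_general {N M : ℕ} (cache : Fin (N + 1) → Finset (Fin M))
    (bound : Idx cache → ℕ)
    (p : Fin (N + 1) → Fin M → ℝ)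
    (w : ℝ)
    {ι : Type} [Fintype ι] (P : ι → ℝ) (A : ι → Idx cache → ℕ)
    (hP : ∀ a, 0 ≤ P a)
    (V : (Idx cache → ℕ) → ℝ)
    (hV : ∀ Q₁ Q₂ : Idx cache → ℕ, (∀ i, Q₁ i ≤ bound i) → (∀ i, Q₂ i ≤ bound i) →
      (∀ i, Q₁ i ≤ Q₂ i) → V Q₁ ≤ V Q₂)
    (ustar : Fin (N + 1) → Option (Fin M)) (hustar : Feasible cache ustar)
    (n : Fin (N + 1)) (m : Fin M) (hm : m ∈ cache n) (hun : ustar n = some m)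
    (Q : Idx cache → ℕ)
    (hthr : (Phi p w bound P A V ustar ⟨(n, m), hm⟩ Q).min ≤ (Q ⟨(n, m), hm⟩ : WithTop ℕ)) :
    (∀ v, Feasible cache v →
        Jcost p w bound P A V Q ustar - Jcost p w bound P A V Q v ≤ 0) ∧
      Jcost p w bound P A V Q ustar =
        ⨅ u : {u // Feasible cache u}, Jcost p w bound P A V Q u.val := by
  obtain ⟨q₀, hq₀, hq₀le⟩ := Finset.exists_mem_le_of_min_le hthr
  have hdom : ∀ v, Feasible cache v →
      Jcost p w bound P A V Q ustar - Jcost p w bound P A V Q v ≤ 0 := fun v hv =>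
    (Jcost_sub_le_of_update_served p w bound P A V hP hV ustar v Q
      (served_of_eq_some hun) hq₀le).trans
      (Jcost_sub_nonpos_of_mem_Phi p w bound P A V ustar _ Q hq₀ hv)
  have hleast : IsLeast (Set.range fun u : {u // Feasible cache u} =>
      Jcost p w bound P A V Q u.val) (Jcost p w bound P A V Q ustar) :=
    ⟨⟨⟨ustar, hustar⟩, rfl⟩, by
      rintro _ ⟨⟨v, hv⟩, rfl⟩
      exact sub_nonpos.mp (hdom v hv)⟩
  exact ⟨hdom, hleast.isGLB.ciInf_eq.symm⟩

/-- Theorem 1, Property 2, first part: threshold structure of the optimal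
policy: let `V` be monotone and `u* ∈ 𝒰` with `u*_n = m ∈ M_n` for some BS `n`.  Then for
every `Q ∈ 𝒬` with `Q_{n,m} ≥ φ_{u*}⁻(Q_{−n,−m})`, one has `Δ_{u*,v}(Q) ≤ 0` for every
`v ∈ 𝒰`; in particular `u*` attains `min_{u∈𝒰} J_V(Q,u)`. -/
theorem optimal_threshold {N M : ℕ} (cache : Fin (N + 1) → Finset (Fin M))
    (hcache0 : ∀ m : Fin M, m ∈ cache 0)
    (bound : Idx cache → ℕ)
    (p : Fin (N + 1) → Fin M → ℝ) (hp : ∀ n m, 0 ≤ p n m)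
    (w : ℝ) (hw : 0 ≤ w)
    {ι : Type} [Fintype ι] (P : ι → ℝ) (A : ι → Idx cache → ℕ)
    (hP : ∀ a, 0 ≤ P a) (hPsum : ∑ a, P a = 1)
    (V : (Idx cache → ℕ) → ℝ)
    (hV : ∀ Q₁ Q₂ : Idx cache → ℕ, (∀ i, Q₁ i ≤ bound i) → (∀ i, Q₂ i ≤ bound i) →
      (∀ i, Q₁ i ≤ Q₂ i) → V Q₁ ≤ V Q₂)
    (ustar : Fin (N + 1) → Option (Fin M)) (hustar : Feasible cache ustar)
    (n : Fin (N + 1)) (m : Fin M) (hm : m ∈ cache n) (hun : ustar n = some m)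
    (Q : Idx cache → ℕ) (hQ : ∀ i, Q i ≤ bound i)
    (hthr : (Phi p w bound P A V ustar ⟨(n, m), hm⟩ Q).min ≤ (Q ⟨(n, m), hm⟩ : WithTop ℕ)) :
    (∀ v, Feasible cache v →
        Jcost p w bound P A V Q ustar - Jcost p w bound P A V Q v ≤ 0) ∧
      Jcost p w bound P A V Q ustar =
        ⨅ u : {u // Feasible cache u}, Jcost p w bound P A V Q u.val :=
  optimal_threshold_general cache bound p w P A hP V hV ustar hustar n m hm hun Q hthr

end HetNet
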